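/- For any real ε with 0 < ε ≤ 1 and integers 2 ≤ t ≤ n, if P ≥ t! · (t·log(nt) + log(1/ε)) independent uniformly random permutations of n elements are generated, then with probability at least 1 − ε, every ordering of every t-element subset appears as a subsequence of at least one of the P permutations. -/

import Mathlib

open scoped Classical

lemma ofFn_comp_sublist {α : Type*} {t n : ℕ} (g : Fin n → α) (p : Fin t → Fin n)
    (hp : StrictMono p) : (List.ofFn (g ∘ p)).Sublist (List.ofFn g) := by
  rw [List.sublist_iff_exists_fin_orderEmbedding_get_eq]
  refine ⟨OrderEmbedding.ofStrictMono
    (fun i => Fin.cast (List.length_ofFn (f := g)).symm (p (Fin.cast List.length_ofFn i))) ?_, ?_⟩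
  · intro a b hab
    simpa using hp (by simpa using hab)
  · intro i
    simp [List.get_ofFn, Fin.cast]

lemma key_count {n t : ℕ} (f : Fin t → Fin n) (hf : Function.Injective f) :
    n.factorial ≤ t.factorial *
      (Finset.univ.filter (fun σ : Equiv.Perm (Fin n) =>
        (List.ofFn f).Sublist (List.ofFn ⇑σ))).card := by
  classical
  set Good := Finset.univ.filter (fun σ : Equiv.Perm (Fin n) =>
        (List.ofFn f).Sublist (List.ofFn ⇑σ)) with hGood
  set ι : Fin t ↪ Fin n := ⟨f, hf⟩ with hι
  set hh : Equiv.Perm (Fin n) → Equiv.Perm (Fin t) :=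
    fun σ => Tuple.sort (fun i => σ⁻¹ (f i)) with hhdef
  set g : Equiv.Perm (Fin t) → Equiv.Perm (Fin n) :=
    fun h => h.viaEmbedding ι with hgdef
  have hgι : ∀ (h : Equiv.Perm (Fin t)) (i : Fin t), g h (f i) = f (h i) := by
    intro h i
    exact h.viaEmbedding_apply ι i
  have hmem : ∀ σ : Equiv.Perm (Fin n), (g (hh σ))⁻¹ * σ ∈ Good := by
    intro σ
    have hsm : StrictMono ((fun i => σ⁻¹ (f i)) ∘ ⇑(hh σ)) := by
      have hmono := Tuple.monotone_sort (fun i => σ⁻¹ (f i))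
      have hinj : Function.Injective ((fun i => σ⁻¹ (f i)) ∘ ⇑(hh σ)) := by
        intro a b hab
        exact (hh σ).injective (hf (σ⁻¹.injective hab))
      exact hmono.strictMono_of_injective hinj
    have hsub : (List.ofFn (⇑σ ∘ ((fun i => σ⁻¹ (f i)) ∘ ⇑(hh σ)))).Sublist
        (List.ofFn ⇑σ) := ofFn_comp_sublist _ _ hsm
    have heq : ⇑σ ∘ ((fun i => σ⁻¹ (f i)) ∘ ⇑(hh σ)) = f ∘ ⇑(hh σ) := by
      funext i; simp
    rw [heq] at hsub
    have hsub2 := hsub.map ⇑(g (hh σ))⁻¹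
    rw [List.map_ofFn, List.map_ofFn] at hsub2
    have heq2 : ⇑(g (hh σ))⁻¹ ∘ (f ∘ ⇑(hh σ)) = f := by
      funext i
      simp only [Function.comp_apply]
      rw [← hgι (hh σ) i]
      simp
    rw [heq2] at hsub2
    simp only [hGood, Finset.mem_filter, Finset.mem_univ, true_and]
    rw [show ⇑((g (hh σ))⁻¹ * σ) = ⇑(g (hh σ))⁻¹ ∘ ⇑σ from rfl]
    exact hsub2
  have hinj : Set.InjOn (fun σ : Equiv.Perm (Fin n) => (hh σ, (g (hh σ))⁻¹ * σ))
      ↑(Finset.univ : Finset (Equiv.Perm (Fin n))) := by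
    intro σ₁ _ σ₂ _ hpair
    simp only [Prod.mk.injEq] at hpair
    obtain ⟨h1, h2⟩ := hpair
    rw [h1] at h2
    exact mul_left_cancel h2
  have hcard := Finset.card_le_card_of_injOn
    (fun σ : Equiv.Perm (Fin n) => (hh σ, (g (hh σ))⁻¹ * σ))
    (fun σ _ => by
      simp only [Finset.mem_coe, Finset.mem_product, Finset.mem_univ, true_and]
      exact hmem σ) hinj (s := Finset.univ) (t := Finset.univ ×ˢ Good)
  rw [Finset.card_product, Finset.card_univ, Finset.card_univ, Fintype.card_perm,
    Fintype.card_perm, Fintype.card_fin, Fintype.card_fin] at hcard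
  exact hcard

lemma analytic_bound (n t P : ℕ) (ht : 2 ≤ t) (htn : t ≤ n)
    (ε : ℝ) (hε : 0 < ε)
    (hP : (t.factorial : ℝ) *
        ((t : ℝ) * Real.log ((n : ℝ) * t) + Real.log (1 / ε)) ≤ (P : ℝ)) :
    (n : ℝ) ^ t * (1 - 1 / (t.factorial : ℝ)) ^ P ≤ ε := by
  have hn2 : 2 ≤ n := le_trans ht htn
  set T : ℝ := (t.factorial : ℝ) with hT
  have hT1 : 1 ≤ T := by rw [hT]; exact_mod_cast Nat.one_le_iff_ne_zero.mpr t.factorial_ne_zero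
  have hT0 : 0 < T := lt_of_lt_of_le one_pos hT1
  have hq0 : 0 ≤ 1 - 1 / T := by
    have : 1 / T ≤ 1 := by rw [div_le_one hT0]; exact hT1
    linarith
  have hqe : 1 - 1 / T ≤ Real.exp (-(1 / T)) := by
    have := Real.add_one_le_exp (-(1 / T)); linarith
  have h2 : (1 - 1 / T) ^ P ≤ Real.exp (-(1 / T)) ^ P := pow_le_pow_left₀ hq0 hqe P
  have h3 : Real.exp (-(1 / T)) ^ P = Real.exp (-((P : ℝ) / T)) := by
    rw [← Real.exp_nat_mul]; ring_nf
  have hn0 : (0 : ℝ) < n := by exact_mod_cast lt_of_lt_of_le two_pos hn2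
  have ht0 : (0 : ℝ) < t := by exact_mod_cast lt_of_lt_of_le two_pos ht
  have hnt0 : (0 : ℝ) < (n : ℝ) * t := by positivity
  have hlog : (t : ℝ) * Real.log ((n : ℝ) * t) + Real.log (1 / ε) ≤ (P : ℝ) / T := by
    rw [le_div_iff₀ hT0]; linarith
  have h4 : Real.exp (-((P : ℝ) / T)) ≤
      Real.exp (-((t : ℝ) * Real.log ((n : ℝ) * t) + Real.log (1 / ε))) :=
    Real.exp_le_exp.mpr (by linarith)
  have hexp1 : Real.exp ((t : ℝ) * Real.log ((n : ℝ) * t)) = ((n : ℝ) * t) ^ t := by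
    rw [← Real.log_pow, Real.exp_log (by positivity)]
  have h5 : Real.exp (-((t : ℝ) * Real.log ((n : ℝ) * t) + Real.log (1 / ε)))
      = (((n : ℝ) * t) ^ t)⁻¹ * ε := by
    rw [neg_add, Real.exp_add, Real.exp_neg, Real.exp_neg, hexp1,
      Real.exp_log (by positivity : (0 : ℝ) < 1 / ε)]
    field_simp
  have hpow : (n : ℝ) ^ t ≤ ((n : ℝ) * t) ^ t := by
    apply pow_le_pow_left₀ (le_of_lt hn0)
    nlinarith [mul_le_mul_of_nonneg_left (show (1:ℝ) ≤ t by exact_mod_cast le_trans one_le_two ht) (le_of_lt hn0)]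
  calc (n : ℝ) ^ t * (1 - 1 / T) ^ P
      ≤ (n : ℝ) ^ t * ((((n : ℝ) * t) ^ t)⁻¹ * ε) := by
        apply mul_le_mul_of_nonneg_left _ (by positivity)
        rw [← h5]
        exact le_trans (h3 ▸ h2) h4
    _ ≤ ε := by
        rw [← mul_assoc]
        have hle1 : (n : ℝ) ^ t * (((n : ℝ) * t) ^ t)⁻¹ ≤ 1 := by
          rw [← div_eq_mul_inv, div_le_one (by positivity)]
          exact hpow
        nlinarith

/-- If `P ≥ t! * (t * log (n * t) + log (1/ε))` independent uniformly random
permutations of `Fin n` are generated, then with probability at least `1 - ε`,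
every ordering of every `t`-element subset appears as a subsequence of at
least one of the `P` permutations. -/
theorem stmt_3 (n t P : ℕ) (ht : 2 ≤ t) (htn : t ≤ n)
    (ε : ℝ) (hε : 0 < ε) (hε1 : ε ≤ 1)
    (hP : (t.factorial : ℝ) *
        ((t : ℝ) * Real.log ((n : ℝ) * t) + Real.log (1 / ε)) ≤ (P : ℝ)) :
    1 - ε ≤
      ((Finset.univ.filter
          (fun σs : Fin P → Equiv.Perm (Fin n) =>
            ∀ π : List (Fin n), π.Nodup → π.length = t →
              ∃ i, π.Sublist (List.ofFn (σs i)))).card : ℝ)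
        / ((n.factorial : ℝ)) ^ P := by
  set N := n.factorial with hN
  set T : ℝ := (t.factorial : ℝ) with hT
  have hT1 : 1 ≤ T := by rw [hT]; exact_mod_cast Nat.one_le_iff_ne_zero.mpr t.factorial_ne_zero
  have hT0 : 0 < T := lt_of_lt_of_le one_pos hT1
  have hq0 : 0 ≤ 1 - 1 / T := by
    have : 1 / T ≤ 1 := by rw [div_le_one hT0]; exact hT1
    linarith
  have hN1 : (1 : ℝ) ≤ (N : ℝ) := by exact_mod_cast Nat.one_le_iff_ne_zero.mpr n.factorial_ne_zero
  have hN0 : (0 : ℝ) < (N : ℝ) := lt_of_lt_of_le one_pos hN1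
  set GoodP := Finset.univ.filter
          (fun σs : Fin P → Equiv.Perm (Fin n) =>
            ∀ π : List (Fin n), π.Nodup → π.length = t →
              ∃ i, π.Sublist (List.ofFn (σs i))) with hGoodP
  set Bad := Finset.univ.filter
          (fun σs : Fin P → Equiv.Perm (Fin n) =>
            ¬ ∀ π : List (Fin n), π.Nodup → π.length = t →
              ∃ i, π.Sublist (List.ofFn (σs i))) with hBad
  set B : (Fin t → Fin n) → Finset (Equiv.Perm (Fin n)) :=
    fun f => Finset.univ.filter (fun σ => ¬ (List.ofFn f).Sublist (List.ofFn ⇑σ)) with hB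
  set Inner : (Fin t → Fin n) → Finset (Fin P → Equiv.Perm (Fin n)) :=
    fun f => Finset.univ.filter (fun σs => ∀ i, σs i ∈ B f) with hInner
  set I := Finset.univ.filter (fun f : Fin t → Fin n => Function.Injective f) with hI
  -- splitting
  have hsplit : GoodP.card + Bad.card = N ^ P := by
    rw [hGoodP, hBad, Finset.card_filter_add_card_filter_not, Finset.card_univ]
    simp [Fintype.card_fun, Fintype.card_perm, hN]
  -- Bad ⊆ biUnion
  have hsub : Bad ⊆ I.biUnion Inner := by
    intro σs hσs
    rw [hBad, Finset.mem_filter] at hσs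
    push_neg at hσs
    obtain ⟨-, π, hnd, hlen, hall⟩ := hσs
    set f : Fin t → Fin n := fun i => π.get ⟨i, by omega⟩ with hf
    have hofn : List.ofFn f = π := by
      apply List.ext_get (by simp [hlen])
      intro i h1 h2
      simp [hf, List.get_ofFn]
    have hfinj : Function.Injective f := by
      intro a b hab
      have := List.nodup_iff_injective_get.mp hnd (by exact hab)
      simpa [Fin.ext_iff] using this
    rw [Finset.mem_biUnion]
    refine ⟨f, by simp [hI, hfinj], ?_⟩
    simp only [hInner, hB, Finset.mem_filter, Finset.mem_univ, true_and]
    intro i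
    rw [hofn]
    exact hall i
  -- inner cardinality
  have hinner : ∀ f, (Inner f).card = (B f).card ^ P := by
    intro f
    have : Inner f = Fintype.piFinset (fun _ : Fin P => B f) := by
      ext σs
      simp [hInner, Fintype.mem_piFinset]
    rw [this, Fintype.card_piFinset]
    simp
  -- per-f bound
  have hq : ∀ f ∈ I, ((B f).card : ℝ) ≤ (1 - 1 / T) * N := by
    intro f hf
    have hfinj : Function.Injective f := (Finset.mem_filter.mp hf).2
    have hkey := key_count f hfinj
    have hs2 : (Finset.univ.filter (fun σ : Equiv.Perm (Fin n) =>
        (List.ofFn f).Sublist (List.ofFn ⇑σ))).card + (B f).card = N := by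
      rw [hB, Finset.card_filter_add_card_filter_not, Finset.card_univ]
      simp [Fintype.card_perm, hN]
    set G := (Finset.univ.filter (fun σ : Equiv.Perm (Fin n) =>
        (List.ofFn f).Sublist (List.ofFn ⇑σ))).card
    have hkey' : (N : ℝ) ≤ T * G := by rw [hN, hT]; exact_mod_cast hkey
    have h6 : (N : ℝ) / T ≤ G := by rw [div_le_iff₀ hT0]; linarith
    have h7 : ((B f).card : ℝ) = (N : ℝ) - G := by
      have : (G : ℝ) + (B f).card = N := by exact_mod_cast hs2
      linarith
    have h8 : (1 - 1 / T) * N = (N : ℝ) - N / T := by ring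
    linarith
  -- Bad cardinality bound
  have hIcard : ((I.card : ℝ)) ≤ (n : ℝ) ^ t := by
    have : I.card ≤ Fintype.card (Fin t → Fin n) := by
      rw [← Finset.card_univ]; exact Finset.card_filter_le _ _
    rw [Fintype.card_fun, Fintype.card_fin, Fintype.card_fin] at this
    exact_mod_cast this
  have hBadcard : (Bad.card : ℝ) ≤ (n : ℝ) ^ t * ((1 - 1 / T) * N) ^ P := by
    have h1 : Bad.card ≤ ∑ f ∈ I, (Inner f).card :=
      le_trans (Finset.card_le_card hsub) (Finset.card_biUnion_le)
    calc (Bad.card : ℝ) ≤ ∑ f ∈ I, ((Inner f).card : ℝ) := by exact_mod_cast h1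
      _ = ∑ f ∈ I, ((B f).card : ℝ) ^ P := by
          apply Finset.sum_congr rfl
          intro f _
          rw [hinner f]; push_cast; ring
      _ ≤ ∑ f ∈ I, ((1 - 1 / T) * N) ^ P := by
          apply Finset.sum_le_sum
          intro f hf
          exact pow_le_pow_left₀ (by positivity) (hq f hf) P
      _ = I.card * ((1 - 1 / T) * N) ^ P := by
          rw [Finset.sum_const, nsmul_eq_mul]
      _ ≤ (n : ℝ) ^ t * ((1 - 1 / T) * N) ^ P := by
          apply mul_le_mul_of_nonneg_right hIcard (by positivity)
  -- conclude
  have hNP : (0 : ℝ) < ((N : ℝ)) ^ P := by positivity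
  rw [le_div_iff₀ hNP]
  have hG : (GoodP.card : ℝ) = ((N : ℝ)) ^ P - Bad.card := by
    have : (GoodP.card : ℝ) + Bad.card = ((N : ℝ)) ^ P := by exact_mod_cast hsplit
    linarith
  have hanal := analytic_bound n t P ht htn ε hε hP
  have hBadcard' : (Bad.card : ℝ) ≤ ((n : ℝ) ^ t * (1 - 1 / T) ^ P) * ((N : ℝ)) ^ P := by
    rw [mul_pow] at hBadcard
    linarith [hBadcard]
  have hmul := mul_le_mul_of_nonneg_right hanal (le_of_lt hNP)
  rw [hG]
  nlinarith
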